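/- With F defined as the group of symplectic matrices of the constrained block form (freedom gauge group for an [[n,k]] code), its cardinality equals |F| = 2^{k(n−k)} · |GL(n−k, F_2)| · 2^{n(n+1)/2 − k(k+1)/2}, i.e., |F| = (2^{n(n+1)/2 + k(n−k)} / 2^{k(k+1)/2}) · ∏_{m=1}^{n−k} (2^{n−k} − 2^{m−1}). -/

import Mathlib

open Matrix

/-- The standard symplectic form `Ω = [[0, I_n],[I_n, 0]]` over `F₂`. -/
def Omega (n : ℕ) : Matrix (Fin n ⊕ Fin n) (Fin n ⊕ Fin n) (ZMod 2) :=
  Matrix.fromBlocks 0 1 1 0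

/-- The set `Sp(F₂^{2n}) = { A | Aᵀ Ω A = Ω }`. -/
def Sp (n : ℕ) : Set (Matrix (Fin n ⊕ Fin n) (Fin n ⊕ Fin n) (ZMod 2)) :=
  {A | Aᵀ * Omega n * A = Omega n}

/-- The freedom gauge set `𝓕`: symplectic matrices `[[Fxx,0],[Fzx,Fzz]]` whose blocks
obey `Fxx = [[I_k,*],[0,*]]`, `Fzz = [[I_k,0],[*,*]]`, `Fzx = [[0_k,*],[*,*]]`. -/
def FreeSet (n k : ℕ) : Set (Matrix (Fin n ⊕ Fin n) (Fin n ⊕ Fin n) (ZMod 2)) :=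
  {M | M ∈ Sp n ∧ ∃ Fxx Fzx Fzz : Matrix (Fin n) (Fin n) (ZMod 2),
    M = Matrix.fromBlocks Fxx 0 Fzx Fzz ∧
    (∀ i j : Fin n, (j : ℕ) < k → Fxx i j = if i = j then 1 else 0) ∧
    (∀ i j : Fin n, (i : ℕ) < k → Fzz i j = if i = j then 1 else 0) ∧
    (∀ i j : Fin n, (i : ℕ) < k → (j : ℕ) < k → Fzx i j = 0)}

/-!
A lower block-triangular matrix `[[X, 0], [Z, W]]` is `Ω`-symplectic iff `XᵀW = 1` and
`ZᵀX + XᵀZ = 0`, i.e. (in characteristic 2) `W = X⁻ᵀ` and `S = XᵀZ` is symmetric. Hence `𝓕` is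
parametrized bijectively by pairs `(X, S)`: `X` invertible with `e₁, …, e_k` as its first columns,
and `S` symmetric with vanishing `k × k` corner; the constraint on `Fzz = X⁻ᵀ` then holds
automatically, since `X⁻¹` also fixes `e₁, …, e_k`. Such an `X` is `[[1, A], [0, B]]` with `A`
arbitrary and `B` invertible, giving `2^{k(n-k)} |GL(n-k, F₂)|` choices, and a symmetric matrix is
a function on unordered pairs of indices, so there are `2^{C(n+1,2) - C(k+1,2)}` choices of `S`.
-/

open Finset

theorem natCard_funs_vanishing_on {α R : Type*} [Fintype α] [Fintype R] [Zero R]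
    (t : Finset α) :
    Nat.card {f : α → R // ∀ a ∈ t, f a = 0} = Fintype.card R ^ (Fintype.card α - #t) := by
  classical
  rw [Nat.card_eq_fintype_card, Fintype.card_subtype]
  have : ({f : α → R | ∀ a ∈ t, f a = 0} : Finset (α → R)) =
      Fintype.piFinset fun a => if a ∈ t then {0} else univ := by
    ext f
    simp only [mem_filter, mem_univ, true_and, Fintype.mem_piFinset]
    refine forall_congr' fun a => ?_
    split_ifs <;> simp [*]
  rw [this, Fintype.card_piFinset]
  simp only [apply_ite card, card_singleton, Finset.card_univ, prod_ite, prod_const_one, one_mul,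
    prod_const, filter_not, subset_univ, filter_mem_eq_of_subset, card_sdiff, inter_univ]

namespace Matrix

theorem add_eq_zero_iff_eq_of_charTwo {m R : Type*} [Ring R] [CharP R 2] {A B : Matrix m m R} :
    A + B = 0 ↔ A = B := by
  simp only [← ext_iff, add_apply, zero_apply, CharTwo.add_eq_zero]

section Symmetric

variable {ι : Type*} (R : Type*) [Fintype ι] [Zero R] (p : ι → Prop) [DecidablePred p]

def symmVanishingOn : Set (Matrix ι ι R) :=
  {S | S.IsSymm ∧ ∀ i j, p i → p j → S i j = 0}

def symmVanishingOnEquiv :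
    symmVanishingOn R p ≃ {f : Sym2 ι → R // ∀ z ∈ (univ.filter p).sym2, f z = 0} where
  toFun S := ⟨Sym2.lift ⟨S.1, fun i j => S.2.1.apply j i⟩, fun z hz => by
    induction z using Sym2.ind with
    | h i j =>
      simp only [mem_sym2_iff, Sym2.mem_iff, mem_filter, mem_univ, true_and] at hz
      exact S.2.2 i j (hz i (.inl rfl)) (hz j (.inr rfl))⟩
  invFun f := ⟨of fun i j => f.1 s(i, j), by ext i j; simp [Sym2.eq_swap],
    fun i j hi hj => f.2 _ (by simp [*])⟩
  left_inv S := rfl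
  right_inv f := by
    ext z
    induction z using Sym2.ind
    rfl

theorem card_symmVanishingOn [Fintype R] :
    Nat.card (symmVanishingOn R p) = Fintype.card R ^
      ((Fintype.card ι + 1).choose 2 - (Fintype.card {i // p i} + 1).choose 2) := by
  rw [Nat.card_congr (symmVanishingOnEquiv R p), natCard_funs_vanishing_on, Sym2.card, card_sym2,
    Fintype.card_subtype]

end Symmetric

section Blocks

variable {κ μ R : Type*} [Fintype κ] [Fintype μ] [DecidableEq κ] [DecidableEq μ] [CommRing R]

theorem natCard_GL_congr {μ' : Type*} [Fintype μ'] [DecidableEq μ'] (e : μ ≃ μ') :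
    Nat.card (GL μ R) = Nat.card (GL μ' R) :=
  Nat.card_congr (Units.mapEquiv (reindexAlgEquiv R R e).toMulEquiv).toEquiv

theorem card_isUnit_toBlocks₁₁_eq_one_toBlocks₂₁_eq_zero :
    Nat.card {N : Matrix (κ ⊕ μ) (κ ⊕ μ) R // IsUnit N ∧ N.toBlocks₁₁ = 1 ∧ N.toBlocks₂₁ = 0} =
      Nat.card (Matrix κ μ R) * Nat.card (GL μ R) := by
  have isUnit_iff (A : Matrix κ μ R) (B : Matrix μ μ R) :
      IsUnit (fromBlocks (1 : Matrix κ κ R) A 0 B) ↔ IsUnit B := by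
    simp only [isUnit_iff_isUnit_det, det_fromBlocks_zero₂₁, det_one, one_mul]
  let f (AB : Matrix κ μ R × GL μ R) :
      {N : Matrix (κ ⊕ μ) (κ ⊕ μ) R // IsUnit N ∧ N.toBlocks₁₁ = 1 ∧ N.toBlocks₂₁ = 0} :=
    ⟨fromBlocks 1 AB.1 0 AB.2, (isUnit_iff _ _).2 AB.2.isUnit, rfl, rfl⟩
  have hf : Function.Bijective f := by
    refine ⟨fun AB AB' h => ?_, fun N => ?_⟩
    · obtain ⟨-, hA, -, hB⟩ := fromBlocks_inj.1 (congrArg Subtype.val h)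
      exact Prod.ext hA (Units.ext hB)
    · obtain ⟨N, hN, h₁₁, h₂₁⟩ := N
      have hN' : fromBlocks 1 N.toBlocks₁₂ 0 N.toBlocks₂₂ = N := by
        rw [← h₁₁, ← h₂₁, fromBlocks_toBlocks]
      rw [← hN', isUnit_iff] at hN
      exact ⟨(N.toBlocks₁₂, hN.unit), Subtype.ext hN'⟩
  rw [← Nat.card_prod, Nat.card_eq_of_bijective f hf]

end Blocks

section Fixing

variable {ι R : Type*} [DecidableEq ι] [CommRing R]

theorem mul_apply_of_row_eq_one [Fintype ι] {A : Matrix ι ι R} {i : ι}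
    (hA : ∀ l, A i l = (1 : Matrix ι ι R) i l) {μ : Type*} (Y : Matrix ι μ R) (j : μ) :
    (A * Y) i j = Y i j := by
  have : (A * Y) i j = ((1 : Matrix ι ι R) * Y) i j := by simp only [mul_apply, hA]
  rw [this, Matrix.one_mul]

theorem inv_apply_of_row_eq_one [Fintype ι] {A : Matrix ι ι R} (hA : IsUnit A.det) {i : ι}
    (hrow : ∀ l, A i l = (1 : Matrix ι ι R) i l) (l : ι) : A⁻¹ i l = (1 : Matrix ι ι R) i l := by
  rw [← mul_apply_of_row_eq_one hrow A⁻¹ l, mul_nonsing_inv A hA]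

theorem col_eq_one_iff_toBlocks (p : ι → Prop) [DecidablePred p] (X : Matrix ι ι R) :
    (∀ i j, p j → X i j = (1 : Matrix ι ι R) i j) ↔
      (reindex (Equiv.sumCompl p).symm (Equiv.sumCompl p).symm X).toBlocks₁₁ = 1 ∧
      (reindex (Equiv.sumCompl p).symm (Equiv.sumCompl p).symm X).toBlocks₂₁ = 0 := by
  constructor
  · intro h
    constructor
    · ext a a'
      simpa [toBlocks₁₁, one_apply, Subtype.ext_iff] using h a a' a'.2
    · ext b a
      have hba : (b : ι) ≠ a := fun hba => b.2 (hba ▸ a.2)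
      simpa [toBlocks₂₁, one_apply, hba] using h b a a.2
  · rintro ⟨h₁₁, h₂₁⟩ i j hj
    by_cases hi : p i
    · simpa [toBlocks₁₁, one_apply, Subtype.ext_iff] using congrFun (congrFun h₁₁ ⟨i, hi⟩) ⟨j, hj⟩
    · have hij : i ≠ j := fun hij => hi (hij ▸ hj)
      simpa [toBlocks₂₁, one_apply, hij] using congrFun (congrFun h₂₁ ⟨i, hi⟩) ⟨j, hj⟩

variable [Fintype ι]

variable (R) in
def unitsFixing (p : ι → Prop) : Set (Matrix ι ι R) :=
  {X | IsUnit X ∧ ∀ i j, p j → X i j = (1 : Matrix ι ι R) i j}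

variable (R) in
def unitsFixingEquiv (p : ι → Prop) [DecidablePred p] :
    unitsFixing R p ≃
      {N : Matrix ({i // p i} ⊕ {i // ¬p i}) ({i // p i} ⊕ {i // ¬p i}) R //
        IsUnit N ∧ N.toBlocks₁₁ = 1 ∧ N.toBlocks₂₁ = 0} :=
  (reindex (Equiv.sumCompl p).symm (Equiv.sumCompl p).symm).subtypeEquiv fun X => by
    rw [unitsFixing, Set.mem_ofPred_eq, col_eq_one_iff_toBlocks, isUnit_iff_isUnit_det X,
      isUnit_iff_isUnit_det (reindex _ _ X), det_reindex_self]

variable (R) in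
theorem card_unitsFixing [Fintype R] (p : ι → Prop) [DecidablePred p] :
    Nat.card (unitsFixing R p) =
      Fintype.card R ^ (Fintype.card {i // p i} * Fintype.card {i // ¬p i}) *
        Nat.card (GL {i // ¬p i} R) := by
  rw [Nat.card_congr (unitsFixingEquiv R p), card_isUnit_toBlocks₁₁_eq_one_toBlocks₂₁_eq_zero,
    show Nat.card (Matrix _ _ R) = Nat.card (_ → _ → R) from rfl, Nat.card_fun, Nat.card_fun,
    ← pow_mul, mul_comm (Nat.card _), Nat.card_eq_fintype_card (α := R), Nat.card_eq_fintype_card,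
    Nat.card_eq_fintype_card (α := {i // ¬p i})]

variable {p : ι → Prop} {X : Matrix ι ι R}

theorem unitsFixing_transpose_apply (hX : X ∈ unitsFixing R p) {i : ι} (hi : p i) (l : ι) :
    Xᵀ i l = (1 : Matrix ι ι R) i l := by
  rw [transpose_apply, hX.2 l i hi, ← transpose_apply (1 : Matrix ι ι R), transpose_one]

theorem unitsFixing_transpose_inv_apply (hX : X ∈ unitsFixing R p) {i : ι} (hi : p i) (l : ι) :
    (Xᵀ)⁻¹ i l = (1 : Matrix ι ι R) i l := by
  refine inv_apply_of_row_eq_one ?_ (unitsFixing_transpose_apply hX hi) l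
  rw [det_transpose, ← isUnit_iff_isUnit_det]
  exact hX.1

noncomputable def gaugeMatrix (X S : Matrix ι ι R) : Matrix (ι ⊕ ι) (ι ⊕ ι) R :=
  fromBlocks X 0 ((Xᵀ)⁻¹ * S) (Xᵀ)⁻¹

theorem gaugeMatrix_injective {X' S S' : Matrix ι ι R} (hX : IsUnit X)
    (h : gaugeMatrix X S = gaugeMatrix X' S') : X = X' ∧ S = S' := by
  obtain ⟨rfl, -, hS, -⟩ := fromBlocks_inj.1 h
  have hdet : IsUnit Xᵀ.det := by rwa [det_transpose, ← isUnit_iff_isUnit_det]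
  refine ⟨rfl, ?_⟩
  simpa only [mul_nonsing_inv_cancel_left _ _ hdet] using congrArg (Xᵀ * ·) hS

end Fixing

end Matrix

section Gauge

variable {n k : ℕ}

theorem fromBlocks_transpose_mul_Omega_mul (X Z W : Matrix (Fin n) (Fin n) (ZMod 2)) :
    (fromBlocks X 0 Z W)ᵀ * Omega n * fromBlocks X 0 Z W =
      fromBlocks (Zᵀ * X + Xᵀ * Z) (Xᵀ * W) (Wᵀ * X) 0 := by
  simp [Omega, fromBlocks_transpose, fromBlocks_multiply]

theorem fromBlocks_mem_Sp_iff (X Z W : Matrix (Fin n) (Fin n) (ZMod 2)) :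
    fromBlocks X 0 Z W ∈ Sp n ↔ Xᵀ * W = 1 ∧ (Xᵀ * Z).IsSymm := by
  have hWX : Wᵀ * X = 1 ↔ Xᵀ * W = 1 :=
    ⟨fun h => by simpa using congrArg transpose h, fun h => by simpa using congrArg transpose h⟩
  rw [Sp, Set.mem_ofPred_eq, fromBlocks_transpose_mul_Omega_mul, Omega, fromBlocks_inj,
    add_eq_zero_iff_eq_of_charTwo, hWX, IsSymm, transpose_mul, transpose_transpose]
  tauto

theorem gaugeMatrix_mem_freeSet {X S : Matrix (Fin n) (Fin n) (ZMod 2)}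
    (hX : X ∈ unitsFixing (ZMod 2) fun j : Fin n => (j : ℕ) < k)
    (hS : S ∈ symmVanishingOn (ZMod 2) fun j : Fin n => (j : ℕ) < k) :
    gaugeMatrix X S ∈ FreeSet n k := by
  have hdet : IsUnit Xᵀ.det := by rw [det_transpose, ← isUnit_iff_isUnit_det]; exact hX.1
  refine ⟨(fromBlocks_mem_Sp_iff _ _ _).2 ⟨mul_nonsing_inv _ hdet, ?_⟩, X, _, _, rfl,
    fun i j hj => (hX.2 i j hj).trans (one_apply ..),
    fun i j hi => (unitsFixing_transpose_inv_apply hX hi j).trans (one_apply ..),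
    fun i j hi hj => ?_⟩
  · rw [mul_nonsing_inv_cancel_left _ _ hdet]
    exact hS.1
  · rw [mul_apply_of_row_eq_one (unitsFixing_transpose_inv_apply hX hi), hS.2 i j hi hj]

theorem exists_gaugeMatrix_eq {M : Matrix (Fin n ⊕ Fin n) (Fin n ⊕ Fin n) (ZMod 2)}
    (hM : M ∈ FreeSet n k) :
    ∃ X ∈ unitsFixing (ZMod 2) (fun j : Fin n => (j : ℕ) < k),
      ∃ S ∈ symmVanishingOn (ZMod 2) (fun j : Fin n => (j : ℕ) < k), gaugeMatrix X S = M := by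
  obtain ⟨hSp, X, Z, W, rfl, hX, -, hZ⟩ := hM
  obtain ⟨hXW, hsymm⟩ := (fromBlocks_mem_Sp_iff X Z W).1 hSp
  have hdet : IsUnit Xᵀ.det := isUnit_det_of_right_inverse hXW
  have hXfix : X ∈ unitsFixing (ZMod 2) fun j : Fin n => (j : ℕ) < k :=
    ⟨by rwa [isUnit_iff_isUnit_det, ← det_transpose],
      fun i j hj => (hX i j hj).trans (one_apply ..).symm⟩
  refine ⟨X, hXfix, Xᵀ * Z, ⟨hsymm, fun i j hi hj => ?_⟩, ?_⟩
  · rw [mul_apply_of_row_eq_one (unitsFixing_transpose_apply hXfix hi), hZ i j hi hj]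
  · rw [gaugeMatrix, nonsing_inv_mul_cancel_left _ _ hdet, inv_eq_right_inv hXW]

theorem natCard_freeSet :
    Nat.card (FreeSet n k) =
      Nat.card (unitsFixing (ZMod 2) fun j : Fin n => (j : ℕ) < k) *
        Nat.card (symmVanishingOn (ZMod 2) fun j : Fin n => (j : ℕ) < k) := by
  let f (XS : (unitsFixing (ZMod 2) fun j : Fin n => (j : ℕ) < k) ×
      (symmVanishingOn (ZMod 2) fun j : Fin n => (j : ℕ) < k)) : FreeSet n k :=
    ⟨gaugeMatrix XS.1 XS.2, gaugeMatrix_mem_freeSet XS.1.2 XS.2.2⟩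
  have hf : Function.Bijective f := by
    refine ⟨fun XS XS' h => ?_, fun M => ?_⟩
    · obtain ⟨hX, hS⟩ := gaugeMatrix_injective XS.1.2.1 (congrArg Subtype.val h)
      exact Prod.ext (Subtype.ext hX) (Subtype.ext hS)
    · obtain ⟨X, hX, S, hS, hM⟩ := exists_gaugeMatrix_eq M.2
      exact ⟨(⟨X, hX⟩, ⟨S, hS⟩), Subtype.ext hM⟩
  rw [← Nat.card_prod, Nat.card_eq_of_bijective f hf]

end Gauge

/-- The cardinality of the freedom gauge group:
`|𝓕| = 2^{k(n−k)} · |GL(n−k, F₂)| · 2^{n(n+1)/2 − k(k+1)/2}`, which equals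
`(2^{n(n+1)/2 + k(n−k)} / 2^{k(k+1)/2}) · ∏_{m=1}^{n−k} (2^{n−k} − 2^{m−1})`. -/
theorem stmt_5 (n k : ℕ) (hk : k ≤ n) :
    Nat.card (FreeSet n k) =
      2 ^ (k * (n - k)) * Nat.card (GL (Fin (n - k)) (ZMod 2)) *
        2 ^ (n * (n + 1) / 2 - k * (k + 1) / 2) ∧
    Nat.card (FreeSet n k) =
      2 ^ (n * (n + 1) / 2 + k * (n - k)) / 2 ^ (k * (k + 1) / 2) *
        ∏ m ∈ Finset.range (n - k), (2 ^ (n - k) - 2 ^ m) := by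
  have card_lt : Fintype.card {j : Fin n // (j : ℕ) < k} = k := by
    rw [Fintype.card_subtype, Fin.card_filter_val_lt, min_eq_right hk]
  have card_not_lt : Fintype.card {j : Fin n // ¬(j : ℕ) < k} = n - k := by
    rw [Fintype.card_subtype_compl, card_lt, Fintype.card_fin]
  have choose_two (m : ℕ) : (m + 1).choose 2 = m * (m + 1) / 2 := by
    rw [Nat.choose_two_right, Nat.add_sub_cancel, mul_comm]
  have hcard : Nat.card (FreeSet n k) =
      2 ^ (k * (n - k)) * Nat.card (GL (Fin (n - k)) (ZMod 2)) *
        2 ^ (n * (n + 1) / 2 - k * (k + 1) / 2) := by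
    rw [natCard_freeSet, card_unitsFixing, card_symmVanishingOn, ZMod.card, card_lt, card_not_lt,
      Fintype.card_fin, choose_two, choose_two,
      natCard_GL_congr (Fintype.equivFinOfCardEq card_not_lt)]
  refine ⟨hcard, ?_⟩
  rw [hcard, card_GL_field, ZMod.card, Fin.prod_univ_eq_prod_range (fun m => 2 ^ (n - k) - 2 ^ m)]
  have hBA : k * (k + 1) / 2 ≤ n * (n + 1) / 2 :=
    Nat.div_le_div_right (Nat.mul_le_mul hk (by omega))
  rw [Nat.pow_div (by omega) two_pos,
    show n * (n + 1) / 2 + k * (n - k) - k * (k + 1) / 2 =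
      k * (n - k) + (n * (n + 1) / 2 - k * (k + 1) / 2) by omega, pow_add]
  ring
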